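/- If an attributed tree transducer A is productive-cycle-free, then for every input s and output t reachable by some derivation, there exists a cycle-free derivation producing t from s. -/

import Mathlib

universe u

inductive RTree (α : Type u) : Type u
  | node : α → List (RTree α) → RTree α

namespace RTree

theorem sizeOf_lt_of_mem {α : Type u} [SizeOf α] {t : RTree α} {ts : List (RTree α)}
    (h : t ∈ ts) : sizeOf t < 1 + sizeOf ts := by
  have := List.sizeOf_lt_of_mem h
  omega

def size {α : Type u} : RTree α → ℕ
  | .node _ ts => 1 + (ts.attach.map (fun x => size x.1)).sum
decreasing_by
  simp only [node.sizeOf_spec]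
  have := List.sizeOf_lt_of_mem x.2
  omega

def height {α : Type u} : RTree α → ℕ
  | .node _ ts => (ts.attach.map (fun x => height x.1 + 1)).foldr max 0
decreasing_by
  simp only [node.sizeOf_spec]
  have := List.sizeOf_lt_of_mem x.2
  omega

def rootLabel {α : Type u} : RTree α → α
  | .node a _ => a

def tmap {α β : Type u} (f : α → β) : RTree α → RTree β
  | .node a ts => .node (f a) (ts.attach.map (fun x => tmap f x.1))
decreasing_by
  simp only [node.sizeOf_spec]
  have := List.sizeOf_lt_of_mem x.2
  omega

def subtreeAt {α : Type u} : RTree α → List ℕ → Option (RTree α)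
  | t, [] => some t
  | .node _ ts, i :: u =>
    match ts[i - 1]? with
    | some t' => if 1 ≤ i then subtreeAt t' u else none
    | none => none

def replaceAt {α : Type u} : RTree α → List ℕ → RTree α → RTree α
  | _, [], t' => t'
  | .node a ts, i :: u, t' =>
      .node a (ts.set (i - 1)
        (match ts[i - 1]? with
         | some ti => replaceAt ti u t'
         | none => .node a []))

def nodesList {α : Type u} : RTree α → List (List ℕ)
  | .node _ ts =>
      [] :: ((ts.attach.map (fun x => nodesList x.1)).zipIdx.flatMap
        fun p => p.1.map fun u => (p.2 + 1) :: u)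
decreasing_by
  simp only [node.sizeOf_spec]
  have := List.sizeOf_lt_of_mem x.2
  omega

def nodeSet {α : Type u} (t : RTree α) : Set (List ℕ) := {v | (t.subtreeAt v).isSome}

inductive WellRanked {α : Type u} (rank : α → ℕ) : RTree α → Prop
  | node (a : α) (ts : List (RTree α)) :
      ts.length = rank a → (∀ t ∈ ts, WellRanked rank t) → WellRanked rank (.node a ts)

inductive Monadic {α : Type u} : RTree α → Prop
  | node (a : α) (ts : List (RTree α)) :
      ts.length ≤ 1 → (∀ t ∈ ts, Monadic t) → Monadic (.node a ts)

end RTree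
open RTree in
/-- Right-hand sides of rules: trees over output symbols `Δ` with leaves of the form
`a'(π i)` (coded `Sum.inr (Sum.inl (a', i))`) or `b'(π)` (coded `Sum.inr (Sum.inr b')`). -/
abbrev RHS (S I Δ : Type) := RTree (Δ ⊕ (S × ℕ ⊕ I))

/-- Sentential forms: trees over `Δ` with leaves labelled by attribute occurrences `α(v)`. -/
abbrev SForm (S I Δ : Type) := RTree (Δ ⊕ ((S ⊕ I) × List ℕ))

/-- An attributed tree transducer with synthesized attributes `S`, inherited attributes `I`,
input alphabet `Sg`, output alphabet `Δ`, initial attribute `init` and rule sets; `rootI`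
are the rules for the root marker `#` (which has only inherited rules `b(π1) → ξ`). -/
structure ATT (S I Sg Δ : Type) where
  init : S
  ruleS : Sg → S → Set (RHS S I Δ)
  ruleI : Sg → I → ℕ → Set (RHS S I Δ)
  rootI : I → Set (RHS S I Δ)

namespace ATT

variable {S I Sg Δ : Type}

/-- The labelling function of `#(s)`: the root `[]` is labelled by `#` (coded `none`),
and the node `1·v` is labelled by the label of `v` in `s`. -/
def labelHash (s : RTree Sg) : List ℕ → Option (Option Sg)
  | [] => some none
  | i :: v => if i = 1 then (s.subtreeAt v).map (fun t => some t.rootLabel) else none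

/-- The labelling function of plain `s` (no root marker). -/
def labelPlain (s : RTree Sg) : List ℕ → Option (Option Sg) :=
  fun v => (s.subtreeAt v).map (fun t => some t.rootLabel)

/-- Right-hand sides for a synthesized attribute at a symbol (`none` codes `#`,
which has no synthesized rules). -/
def rhsS (A : ATT S I Sg Δ) : Option Sg → S → Set (RHS S I Δ)
  | none, _ => ∅
  | some σ, a => A.ruleS σ a

/-- Right-hand sides for an inherited attribute `b(π i)` at a symbol. -/
def rhsI (A : ATT S I Sg Δ) : Option Sg → I → ℕ → Set (RHS S I Δ)
  | none, b, i => if i = 1 then A.rootI b else ∅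
  | some σ, b, i => A.ruleI σ b i

/-- Instantiation `ξ[π ← v]` of a right-hand side at node `v`. -/
def inst (v : List ℕ) (ξ : RHS S I Δ) : SForm S I Δ :=
  ξ.tmap (fun l => match l with
    | Sum.inl d => Sum.inl d
    | Sum.inr (Sum.inl (a, i)) => Sum.inr (Sum.inl a, v ++ [i])
    | Sum.inr (Sum.inr b) => Sum.inr (Sum.inr b, v))

/-- `t` has at position `p` a leaf labelled by the attribute occurrence `γ(v)`. -/
def IsAttLeaf (t : SForm S I Δ) (p : List ℕ) (γ : S ⊕ I) (v : List ℕ) : Prop :=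
  t.subtreeAt p = some (.node (Sum.inr (γ, v)) [])

/-- The attribute occurrence `γ(v)` occurs in `t`. -/
def Occurs (t : SForm S I Δ) (γ : S ⊕ I) (v : List ℕ) : Prop :=
  ∃ p, IsAttLeaf t p γ v

/-- One derivation step w.r.t. a labelling function `lab`: a leaf labelled `γ(v·i)`
(`i = 0` for synthesized, `i > 0` for inherited attributes) is replaced by an
instantiated right-hand side. -/
def StepL (A : ATT S I Sg Δ) (lab : List ℕ → Option (Option Sg))
    (t t' : SForm S I Δ) : Prop :=
  ∃ p γ v ξ, IsAttLeaf t p γ v ∧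
    ((∃ a l, γ = Sum.inl a ∧ lab v = some l ∧ ξ ∈ A.rhsS l a) ∨
     (∃ b w i l, γ = Sum.inr b ∧ v = w ++ [i] ∧ 1 ≤ i ∧ lab w = some l ∧ ξ ∈ A.rhsI l b i)) ∧
    t' = t.replaceAt p (inst v ξ)

/-- The derivation relation `⇒_{A, #(s)}`. -/
def Step (A : ATT S I Sg Δ) (s : RTree Sg) : SForm S I Δ → SForm S I Δ → Prop :=
  StepL A (labelHash s)

/-- The derivation relation `⇒_{A, s}` (without root marker). -/
def StepPlain (A : ATT S I Sg Δ) (s : RTree Sg) : SForm S I Δ → SForm S I Δ → Prop :=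
  StepL A (labelPlain s)

/-- The sentential form consisting of the single attribute occurrence `γ(v)`. -/
def attForm (γ : S ⊕ I) (v : List ℕ) : SForm S I Δ := .node (Sum.inr (γ, v)) []

/-- The initial sentential form `a₀(1)`. -/
def initForm (A : ATT S I Sg Δ) : SForm S I Δ := attForm (Sum.inl A.init) [1]

/-- Embedding of output trees into sentential forms. -/
def out (t : RTree Δ) : SForm S I Δ := t.tmap Sum.inl

/-- The translation realized by `A`:
`{(s,t) | a₀(1) ⇒*_{A,#(s)} t}`. -/
def trans (A : ATT S I Sg Δ) : Set (RTree Sg × RTree Δ) :=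
  {p | Relation.ReflTransGen (Step A p.1) (initForm A) (out p.2)}

/-- `A` is deterministic: at most one rule per left-hand side. -/
def Deterministic (A : ATT S I Sg Δ) : Prop :=
  (∀ σ a, (A.ruleS σ a).Subsingleton) ∧ (∀ σ b i, (A.ruleI σ b i).Subsingleton) ∧
    (∀ b, (A.rootI b).Subsingleton)

/-- `A` is functional: its translation is a partial function. -/
def Functional (A : ATT S I Sg Δ) : Prop :=
  ∀ s t₁ t₂, (s, t₁) ∈ A.trans → (s, t₂) ∈ A.trans → t₁ = t₂

/-- `A` has monadic output: every right-hand side is a monadic tree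
(all output symbols have rank at most 1). -/
def MonadicOutput (A : ATT S I Sg Δ) : Prop :=
  (∀ σ a ξ, ξ ∈ A.ruleS σ a → RTree.Monadic ξ) ∧
  (∀ σ b i ξ, ξ ∈ A.ruleI σ b i → RTree.Monadic ξ) ∧
  (∀ b ξ, ξ ∈ A.rootI b → RTree.Monadic ξ)

/-- Attribute `a` processes node `v` of the input tree `s`:
some tree derivable from `a₀(1)` contains an occurrence `a(1·v)`. -/
def Processes (A : ATT S I Sg Δ) (s : RTree Sg) (a : S) (v : List ℕ) : Prop :=
  ∃ t, Relation.ReflTransGen (Step A s) (initForm A) t ∧ Occurs t (Sum.inl a) (1 :: v)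

/-- The is-dependency of `s`:
`ISD_A(s) = {(b,a) | a(ε) ⇒*_{A,s} t' and b(ε) occurs in t'}`. -/
def ISD (A : ATT S I Sg Δ) (s : RTree Sg) : Set (I × S) :=
  {q | ∃ t', Relation.ReflTransGen (StepPlain A s) (attForm (Sum.inl q.2) []) t' ∧
        Occurs t' (Sum.inr q.1) []}

/-- The visiting pair set at node `v` of `s`, where `sv = s/v`. -/
def VisitSet (A : ATT S I Sg Δ) (s sv : RTree Sg) (v : List ℕ) : Set (I × S) :=
  {q | q ∈ A.ISD sv ∧ A.Processes s q.2 v}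

/-- `Ω_ψ`: all trees whose is-dependency contains `ψ`. -/
def Omega (A : ATT S I Sg Δ) (ψ : Set (I × S)) : Set (RTree Sg) :=
  {s' | ψ ⊆ A.ISD s'}

/-- `t` is the normal form of `t₀` w.r.t. `⇒_{A,s}` (no root marker). -/
def IsNF (A : ATT S I Sg Δ) (s : RTree Sg) (t₀ t : SForm S I Δ) : Prop :=
  Relation.ReflTransGen (StepPlain A s) t₀ t ∧ ∀ u, ¬ StepPlain A s t u

/-- `A` is circular: for some input `s`, some attribute occurrence `α(v)` in `#(s)` rewrites
in one or more steps to a tree containing `α(v)` again. -/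
def Circular (A : ATT S I Sg Δ) : Prop :=
  ∃ (s : RTree Sg) (γ : S ⊕ I) (v : List ℕ) (t : SForm S I Δ),
    (labelHash s v).isSome ∧ Relation.TransGen (Step A s) (attForm γ v) t ∧ Occurs t γ v

/-- A derivation of `A` on input `s`: a nonempty sequence of sentential forms starting
with `a₀(1)` and chained by `⇒_{A,#(s)}`. -/
def IsDeriv (A : ATT S I Sg Δ) (s : RTree Sg) (ts : List (SForm S I Δ)) : Prop :=
  ts.head? = some (initForm A) ∧ ts.Chain' (Step A s)

end ATT

/-- A derivation contains a cycle if some attribute occurrence occurs in two distinct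
intermediate trees; it is productive if moreover the two trees differ. -/
def CycleFree {S I D : Type} (ts : List (SForm S I D)) : Prop :=
  ∀ (i j : ℕ) (hi : i < ts.length) (hj : j < ts.length), i ≠ j →
    ∀ (γ : S ⊕ I) (ν : List ℕ),
      ATT.Occurs (ts.get ⟨i, hi⟩) γ ν → ATT.Occurs (ts.get ⟨j, hj⟩) γ ν → False

/-- `A` is productive-cycle-free on `s`: no derivation contains indices `i < j` with
`t_i ≠ t_j` and a common attribute occurrence. -/
def ProductiveCycleFree {S I Sg D : Type} (A : ATT S I Sg D) (s : RTree Sg) : Prop :=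
  ∀ ts : List (SForm S I D), ATT.IsDeriv A s ts →
    ¬ ∃ (i j : ℕ) (hi : i < ts.length) (hj : j < ts.length), i < j ∧
        ts.get ⟨i, hi⟩ ≠ ts.get ⟨j, hj⟩ ∧
        ∃ (γ : S ⊕ I) (ν : List ℕ),
          ATT.Occurs (ts.get ⟨i, hi⟩) γ ν ∧ ATT.Occurs (ts.get ⟨j, hj⟩) γ ν

/-! In a productive-cycle-free derivation, two sentential forms sharing an attribute occurrence
are equal, so the segment between them can be cut out. Hence a shortest derivation of `t` is
cycle-free. -/

namespace List

variable {α : Type*} {l : List α} {i j : ℕ}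

theorem isChain_take_append_drop_of_getElem_eq {R : α → α → Prop} (hl : l.IsChain R)
    (hij : i < j) (hj : j < l.length) (heq : l[i] = l[j]) :
    (l.take i ++ l.drop j).IsChain R := by
  refine isChain_append.2 ⟨hl.take i, hl.drop j, fun x hx y hy => ?_⟩
  rw [getLast?_take] at hx
  rw [head?_drop, getElem?_eq_getElem hj, Option.mem_some_iff] at hy
  rcases Nat.eq_zero_or_pos i with rfl | hi
  · simp at hx
  · rw [if_neg hi.ne', getElem?_eq_getElem (by omega), Option.some_or,
      Option.mem_some_iff] at hx
    have hstep := isChain_iff_getElem.1 hl (i - 1) (by omega)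
    simp only [Nat.sub_add_cancel hi, heq] at hstep
    rwa [← hx, ← hy]

theorem head?_take_append_drop_of_getElem_eq (hij : i < j) (hj : j < l.length)
    (heq : l[i] = l[j]) : (l.take i ++ l.drop j).head? = l.head? := by
  rw [head?_append, head?_take, head?_drop]
  rcases Nat.eq_zero_or_pos i with rfl | hi
  · simp [head?_eq_getElem?, getElem?_eq_getElem hj, getElem?_eq_getElem (hij.trans hj), heq]
  · rw [if_neg hi.ne', head?_eq_getElem?, getElem?_eq_getElem (by omega), Option.some_or]

theorem getLast?_take_append_drop (hj : j < l.length) :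
    (l.take i ++ l.drop j).getLast? = l.getLast? := by
  rw [getLast?_append, getLast?_drop, if_neg (by omega)]
  obtain ⟨x, hx⟩ := Option.isSome_iff_exists.1
    (getLast?_isSome.2 (ne_nil_of_length_pos (Nat.zero_lt_of_lt hj)))
  rw [hx, Option.some_or]

theorem length_take_append_drop_lt (hij : i < j) (hj : j < l.length) :
    (l.take i ++ l.drop j).length < l.length := by
  simp only [length_append, length_take, length_drop]
  omega

end List

namespace ATT

variable {S I Sg D : Type} {A : ATT S I Sg D} {s : RTree Sg} {ts : List (SForm S I D)}
  {i j : ℕ}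

theorem IsDeriv.take_append_drop (hd : IsDeriv A s ts) (hij : i < j) (hj : j < ts.length)
    (heq : ts[i] = ts[j]) : IsDeriv A s (ts.take i ++ ts.drop j) :=
  ⟨(ts.head?_take_append_drop_of_getElem_eq hij hj heq).trans hd.1,
    ts.isChain_take_append_drop_of_getElem_eq hd.2 hij hj heq⟩

theorem _root_.ProductiveCycleFree.exists_getElem_eq_of_not_cycleFree
    (hpcf : ProductiveCycleFree A s) (hd : IsDeriv A s ts) (hcf : ¬ CycleFree ts) :
    ∃ i j, ∃ (hij : i < j) (hj : j < ts.length), ts[i]'(hij.trans hj) = ts[j] := by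
  simp only [CycleFree, not_forall, imp_false, not_not, List.get_eq_getElem, exists_prop] at hcf
  obtain ⟨i, j, hi, hj, hne, γ, ν, hoi, hoj⟩ := hcf
  have key : ∀ i j (hi : i < ts.length) (hj : j < ts.length), i < j → Occurs ts[i] γ ν →
      Occurs ts[j] γ ν → ts[i] = ts[j] := fun i j hi hj hij hoi hoj => by
    by_contra hne
    exact hpcf ts hd ⟨i, j, hi, hj, hij, hne, γ, ν, hoi, hoj⟩
  rcases Nat.lt_or_gt_of_ne hne with hij | hji
  · exact ⟨i, j, hij, hj, key i j hi hj hij hoi hoj⟩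
  · exact ⟨j, i, hji, hi, key j i hj hi hji hoj hoi⟩

theorem IsDeriv.cycleFree_of_forall_length_le (hpcf : ProductiveCycleFree A s)
    (hd : IsDeriv A s ts) (hmin : ∀ ts', IsDeriv A s ts' → ts'.getLast? = ts.getLast? →
      ts.length ≤ ts'.length) : CycleFree ts := by
  by_contra hcf
  obtain ⟨i, j, hij, hj, heq⟩ := hpcf.exists_getElem_eq_of_not_cycleFree hd hcf
  have hle := hmin _ (hd.take_append_drop hij hj heq) (ts.getLast?_take_append_drop hj)
  exact (ts.length_take_append_drop_lt hij hj).not_ge hle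

end ATT

/-- If `A` is productive-cycle-free, then every output reachable by some derivation is
reachable by a cycle-free derivation. -/
theorem cycleFree_derivation_exists {S I Sg D : Type} (A : ATT S I Sg D)
    (s : RTree Sg) (t : RTree D)
    (hpcf : ProductiveCycleFree A s)
    (hder : ∃ ts : List (SForm S I D),
      ATT.IsDeriv A s ts ∧ ts.getLast? = some (ATT.out t)) :
    ∃ ts : List (SForm S I D),
      ATT.IsDeriv A s ts ∧ ts.getLast? = some (ATT.out t) ∧ CycleFree ts := by
  classical
  have hlen : ∃ n, ∃ ts : List (SForm S I D),
      ts.length = n ∧ ATT.IsDeriv A s ts ∧ ts.getLast? = some (ATT.out t) :=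
    let ⟨ts, h⟩ := hder; ⟨ts.length, ts, rfl, h⟩
  obtain ⟨ts, hn, hd, hlast⟩ := Nat.find_spec hlen
  refine ⟨ts, hd, hlast, hd.cycleFree_of_forall_length_le hpcf fun ts' hd' hlast' => ?_⟩
  rw [hn]
  exact Nat.find_min' hlen ⟨ts', rfl, hd', hlast'.trans hlast⟩
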